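/- For every binary multilinear polynomial p over a prime finite field F in variables x₁,...,xₙ, there exists a unique reduced ordered BDD w with ⟦w⟧ = p. -/

import Mathlib

/-!
A multilinear polynomial splits along any variable as `p = (1 - x)·p[x:=0] + x·p[x:=1]`.
Splitting along the top variable first and recursing on both restrictions, with the reduction
`⟨x, u, u⟩ = u`, builds a reduced ordered BDD for `p`; once every variable is substituted the
polynomial is a constant, which binariness forces to be `0` or `1`. Conversely, substituting `0`
and `1` for the top variable of a reduced BDD returns the arithmetisations of its two children,
while variables above its level do not occur in it; so running the same construction on `⟦w⟧`
rebuilds `w`, which gives uniqueness.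
-/

open MvPolynomial

/-- Degree reduction `δ_x`: replaces every power `x^j` (`j ≥ 1`) in each monomial by `x`. -/
noncomputable def deltaRed {V F : Type*} [CommRing F] [DecidableEq V]
    (x : V) (p : MvPolynomial V F) : MvPolynomial V F :=
  p.support.sum fun m => monomial (Finsupp.update m x (min (m x) 1)) (coeff m p)

/-- Partial evaluation `[x := a] p`: substitute the constant `a` for variable `x`. -/
noncomputable def pevalVar {V F : Type*} [CommRing F] [DecidableEq V]
    (x : V) (a : F) (p : MvPolynomial V F) : MvPolynomial V F :=
  aeval (fun y => if y = x then C a else X y) p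

/-- A polynomial is multilinear if every variable has degree at most 1 in every monomial. -/
def Multilinear {V F : Type*} [CommSemiring F] (p : MvPolynomial V F) : Prop :=
  ∀ m ∈ p.support, ∀ x : V, m x ≤ 1

/-- Binary equivalence: `p` and `q` agree on all assignments with values in `{0,1}`. -/
def BinaryEquiv {V F : Type*} [CommSemiring F] (p q : MvPolynomial V F) : Prop :=
  ∀ σ : V → F, (∀ x, σ x = 0 ∨ σ x = 1) → eval σ p = eval σ q

/-- A polynomial is binary if it takes values in `{0,1}` on all `{0,1}` assignments. -/
def BinaryPoly {V F : Type*} [CommSemiring F] (p : MvPolynomial V F) : Prop :=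
  ∀ σ : V → F, (∀ x, σ x = 0 ∨ σ x = 1) → eval σ p = 0 ∨ eval σ p = 1

/-- Syntax of (not necessarily reduced) ordered binary decision diagrams over variables `Fin n`. -/
inductive BDD (n : ℕ) where
  | tru  : BDD n
  | fls  : BDD n
  | node (i : Fin n) (u v : BDD n) : BDD n
deriving DecidableEq

/-- Level of a BDD: `⟨true⟩, ⟨false⟩` have level 0; a node on variable `x_i` has level `i+1`. -/
def BDD.level {n : ℕ} : BDD n → ℕ
  | tru => 0
  | fls => 0
  | node i _ _ => i.val + 1

/-- Well-formedness (reduced, ordered): children are distinct, of lower level and well-formed. -/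
def BDD.wf {n : ℕ} : BDD n → Prop
  | tru => True
  | fls => True
  | node i u v => u ≠ v ∧ u.level ≤ i.val ∧ v.level ≤ i.val ∧ u.wf ∧ v.wf

/-- Arithmetisation of a BDD. -/
noncomputable def BDD.arith {n : ℕ} (F : Type*) [CommRing F] : BDD n → MvPolynomial (Fin n) F
  | tru => 1
  | fls => 0
  | node i u v => (1 - MvPolynomial.X i) * u.arith F + MvPolynomial.X i * v.arith F

section PevalVar

variable {V F : Type*} [CommRing F] [DecidableEq V]

lemma pevalVar_monomial_of_eq_zero {x : V} {m : V →₀ ℕ} (hm : m x = 0) (a c : F) :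
    pevalVar x a (monomial m c) = monomial m c := by
  rw [pevalVar, aeval_monomial, monomial_eq, algebraMap_eq]
  congr 1
  refine Finsupp.prod_congr fun y hy => ?_
  rw [if_neg (by rintro rfl; exact Finsupp.mem_support_iff.mp hy hm)]

lemma pevalVar_monomial (x : V) (a : F) (m : V →₀ ℕ) (c : F) :
    pevalVar x a (monomial m c) = monomial (m.erase x) (c * a ^ m x) := by
  have hsplit : monomial m c = X x ^ m x * monomial (m.erase x) c := by
    rw [← monomial_single_add, Finsupp.single_add_erase]
  rw [hsplit, pevalVar, map_mul, map_pow, aeval_X, if_pos rfl, ← pevalVar,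
    pevalVar_monomial_of_eq_zero Finsupp.erase_same, ← map_pow, C_mul_monomial, mul_comm]

lemma eval_pevalVar (x : V) (a : F) (σ : V → F) (p : MvPolynomial V F) :
    eval σ (pevalVar x a p) = eval (Function.update σ x a) p := by
  rw [pevalVar, ← coe_aeval_eq_eval, ← coe_aeval_eq_eval, aeval_eq_bind₁]
  refine (aeval_bind₁ _ _ _).trans (congrArg (aeval · p) (funext fun y => ?_))
  rw [Function.update_apply]
  split_ifs <;> simp

lemma vars_pevalVar_subset (x : V) (a : F) (p : MvPolynomial V F) :
    (pevalVar x a p).vars ⊆ p.vars.erase x := by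
  intro j hj
  rw [pevalVar, aeval_eq_bind₁] at hj
  obtain ⟨i, hi, hji⟩ := mem_vars_bind₁ _ p hj
  by_cases hix : i = x
  · simp [hix, vars_C] at hji
  · rw [if_neg hix, vars_def, Multiset.mem_toFinset] at hji
    obtain rfl := Multiset.mem_singleton.mp (Multiset.mem_of_le (degrees_X' i) hji)
    exact Finset.mem_erase.mpr ⟨hix, hi⟩

lemma pevalVar_eq_sum (x : V) (a : F) (p : MvPolynomial V F) :
    pevalVar x a p = ∑ m ∈ p.support, monomial (m.erase x) (coeff m p * a ^ m x) := by
  conv_lhs => rw [p.as_sum]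
  rw [pevalVar, map_sum]
  exact Finset.sum_congr rfl fun m _ => pevalVar_monomial x a m (coeff m p)

lemma multilinear_pevalVar {p : MvPolynomial V F} (hp : Multilinear p) (x : V) (a : F) :
    Multilinear (pevalVar x a p) := by
  intro m' hm' y
  rw [pevalVar_eq_sum] at hm'
  obtain ⟨m, hm, hm'⟩ := Finset.mem_biUnion.mp (support_sum hm')
  rw [Finset.mem_singleton.mp (support_monomial_subset hm'), Finsupp.erase_apply]
  split_ifs
  · exact zero_le_one
  · exact hp m hm y

lemma binaryPoly_pevalVar {p : MvPolynomial V F} (hp : BinaryPoly p) (x : V) {a : F}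
    (ha : a = 0 ∨ a = 1) : BinaryPoly (pevalVar x a p) := by
  intro σ hσ
  rw [eval_pevalVar]
  refine hp _ fun y => ?_
  rw [Function.update_apply]
  split_ifs
  exacts [ha, hσ y]

lemma monomial_eq_shannon {x : V} {m : V →₀ ℕ} (hm : m x ≤ 1) (c : F) :
    monomial m c
      = (1 - X x) * pevalVar x 0 (monomial m c) + X x * pevalVar x 1 (monomial m c) := by
  rw [pevalVar_monomial, pevalVar_monomial, one_pow, mul_one]
  rcases Nat.le_one_iff_eq_zero_or_eq_one.mp hm with h | h
  · rw [h, pow_zero, mul_one, Finsupp.erase_of_notMem_support (Finsupp.notMem_support_iff.mpr h)]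
    ring
  · rw [h, pow_one, mul_zero, monomial_zero, mul_zero, zero_add, ← pow_one (X x), ← h,
      ← monomial_single_add, Finsupp.single_add_erase]

theorem Multilinear.shannon {p : MvPolynomial V F} (hp : Multilinear p) (x : V) :
    p = (1 - X x) * pevalVar x 0 p + X x * pevalVar x 1 p := by
  conv_lhs => rw [p.as_sum]
  rw [Finset.sum_congr rfl fun m hm => monomial_eq_shannon (hp m hm x) (coeff m p),
    Finset.sum_add_distrib, ← Finset.mul_sum, ← Finset.mul_sum]
  simp only [pevalVar, ← map_sum, ← p.as_sum]

end PevalVar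

namespace BDD

variable {n : ℕ} {F : Type*} [CommRing F]

lemma level_le (w : BDD n) : w.level ≤ n := by
  cases w with
  | tru | fls => exact Nat.zero_le n
  | node i _ _ => exact i.isLt

lemma pevalVar_arith_of_level_le {w : BDD n} (hw : w.wf) {j : Fin n} (h : w.level ≤ j) (a : F) :
    pevalVar j a (w.arith F) = w.arith F := by
  induction w with
  | tru => rw [arith, pevalVar, map_one]
  | fls => rw [arith, pevalVar, map_zero]
  | node i u v ihu ihv =>
    obtain ⟨-, hlu, hlv, hu, hv⟩ := hw
    have hij : i < j := h
    have hu' := ihu hu (by omega)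
    have hv' := ihv hv (by omega)
    rw [pevalVar] at hu' hv' ⊢
    rw [arith, map_add, map_mul, map_mul, map_sub, map_one, aeval_X, if_neg hij.ne, hu', hv']

lemma pevalVar_arith_node {i : Fin n} {u v : BDD n} (hw : (node i u v).wf) (a : F) :
    pevalVar i a ((node i u v).arith F) = (1 - C a) * u.arith F + C a * v.arith F := by
  obtain ⟨-, hlu, hlv, hu, hv⟩ := hw
  have hu' := pevalVar_arith_of_level_le hu hlu a
  have hv' := pevalVar_arith_of_level_le hv hlv a
  rw [pevalVar] at hu' hv' ⊢
  rw [arith, map_add, map_mul, map_mul, map_sub, map_one, aeval_X, if_pos rfl, hu', hv']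

lemma pevalVar_zero_arith_node {i : Fin n} {u v : BDD n} (hw : (node i u v).wf) :
    pevalVar i 0 ((node i u v).arith F) = u.arith F := by
  rw [pevalVar_arith_node hw, map_zero]
  ring

lemma pevalVar_one_arith_node {i : Fin n} {u v : BDD n} (hw : (node i u v).wf) :
    pevalVar i 1 ((node i u v).arith F) = v.arith F := by
  rw [pevalVar_arith_node hw, map_one]
  ring

def mkNode (i : Fin n) (u v : BDD n) : BDD n :=
  if u = v then u else node i u v

lemma wf_mkNode {i : Fin n} {u v : BDD n} (hu : u.wf) (hv : v.wf) (hlu : u.level ≤ i)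
    (hlv : v.level ≤ i) : (mkNode i u v).wf := by
  unfold mkNode
  split_ifs with huv
  · exact hu
  · exact ⟨huv, hlu, hlv, hu, hv⟩

lemma level_mkNode_le {i : Fin n} {u v : BDD n} (hlu : u.level ≤ i) :
    (mkNode i u v).level ≤ i + 1 := by
  unfold mkNode
  split_ifs
  · omega
  · exact le_rfl

lemma arith_mkNode (i : Fin n) (u v : BDD n) :
    (mkNode i u v).arith F = (1 - X i) * u.arith F + X i * v.arith F := by
  unfold mkNode
  split_ifs with huv
  · rw [huv]
    ring
  · rfl

open Classical in
noncomputable def ofPoly : ℕ → MvPolynomial (Fin n) F → BDD n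
  | 0, p => if constantCoeff p = 1 then tru else fls
  | k + 1, p =>
    if h : k < n then
      mkNode ⟨k, h⟩ (ofPoly k (pevalVar ⟨k, h⟩ 0 p)) (ofPoly k (pevalVar ⟨k, h⟩ 1 p))
    else ofPoly k p

lemma level_ofPoly_le (k : ℕ) (p : MvPolynomial (Fin n) F) : (ofPoly k p).level ≤ k := by
  induction k generalizing p with
  | zero =>
    rw [ofPoly]
    split_ifs <;> exact le_rfl
  | succ k ih =>
    rw [ofPoly]
    split_ifs with h
    · exact level_mkNode_le (ih _)
    · exact (ih p).trans k.le_succ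

lemma wf_ofPoly (k : ℕ) (p : MvPolynomial (Fin n) F) : (ofPoly k p).wf := by
  induction k generalizing p with
  | zero =>
    rw [ofPoly]
    split_ifs <;> trivial
  | succ k ih =>
    rw [ofPoly]
    split_ifs with h
    · exact wf_mkNode (ih _) (ih _) (level_ofPoly_le _ _) (level_ofPoly_le _ _)
    · exact ih p

theorem arith_ofPoly {k : ℕ} {p : MvPolynomial (Fin n) F} (hp : Multilinear p)
    (hb : BinaryPoly p) (hk : ∀ i ∈ p.vars, (i : ℕ) < k) : (ofPoly k p).arith F = p := by
  induction k generalizing p with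
  | zero =>
    have hC : p = C (constantCoeff p) := by
      rw [constantCoeff_eq, ← vars_eq_empty_iff_eq_C, Finset.eq_empty_iff_forall_notMem]
      exact fun i hi => (hk i hi).not_ge (Nat.zero_le _)
    have hbit : constantCoeff p = 0 ∨ constantCoeff p = 1 := by
      simpa only [← eval_zero] using hb 0 fun _ => Or.inl rfl
    rw [ofPoly]
    split_ifs with h
    · rw [arith, hC, h, C_1]
    · rw [arith, hC, hbit.resolve_right h, C_0]
  | succ k ih =>
    rw [ofPoly]
    split_ifs with h
    · have hk' (a : F) : ∀ i ∈ (pevalVar ⟨k, h⟩ a p).vars, (i : ℕ) < k := fun i hi => by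
        obtain ⟨hik, hi⟩ := Finset.mem_erase.mp (vars_pevalVar_subset _ a p hi)
        have := hk i hi
        have : (i : ℕ) ≠ k := fun e => hik (Fin.ext e)
        omega
      rw [arith_mkNode,
        ih (multilinear_pevalVar hp _ 0) (binaryPoly_pevalVar hb _ (Or.inl rfl)) (hk' 0),
        ih (multilinear_pevalVar hp _ 1) (binaryPoly_pevalVar hb _ (Or.inr rfl)) (hk' 1)]
      exact (hp.shannon _).symm
    · exact ih hp hb fun i _ => by omega

theorem ofPoly_arith [Nontrivial F] {k : ℕ} {w : BDD n} (hw : w.wf) (hk : w.level ≤ k) :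
    ofPoly k (w.arith F) = w := by
  induction k generalizing w with
  | zero =>
    cases w with
    | tru => rw [ofPoly, arith, map_one, if_pos rfl]
    | fls => rw [ofPoly, arith, map_zero, if_neg zero_ne_one]
    | node i u v => exact absurd hk (Nat.not_succ_le_zero _)
  | succ k ih =>
    rw [ofPoly]
    split_ifs with h
    · rcases hk.lt_or_eq with hlt | heq
      · have hlev : w.level ≤ (⟨k, h⟩ : Fin n) := Nat.le_of_lt_succ hlt
        rw [pevalVar_arith_of_level_le hw hlev, pevalVar_arith_of_level_le hw hlev,
          ih hw hlev, mkNode, if_pos rfl]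
      · cases w with
        | tru | fls => exact absurd heq (Nat.succ_ne_zero _).symm
        | node i u v =>
          obtain rfl : i = ⟨k, h⟩ := Fin.ext (Nat.succ_injective heq)
          rw [pevalVar_zero_arith_node hw, pevalVar_one_arith_node hw]
          obtain ⟨huv, hlu, hlv, hu, hv⟩ := hw
          rw [ih hu hlu, ih hv hlv, mkNode, if_neg huv]
    · exact ih hw (w.level_le.trans (Nat.le_of_not_lt h))

end BDD

/-- every binary multilinear polynomial is the arithmetisation of a unique
reduced ordered BDD. -/
theorem bdd_exists_unique_of_binary_multilinear {q : ℕ} [Fact q.Prime] {n : ℕ}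
    (p : MvPolynomial (Fin n) (ZMod q)) (hmul : Multilinear p) (hbin : BinaryPoly p) :
    ∃! w : BDD n, w.wf ∧ w.arith (ZMod q) = p := by
  refine ⟨BDD.ofPoly n p, ⟨BDD.wf_ofPoly n p, BDD.arith_ofPoly hmul hbin fun i _ => i.isLt⟩, ?_⟩
  rintro w ⟨hw, rfl⟩
  exact (BDD.ofPoly_arith hw w.level_le).symm
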